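/- Let p(x) = Σ_{l=0}^{N} b_l x^l be any real polynomial of degree at most N, and let 0 < α_k < π/2 for 0 ≤ k ≤ N. Then there exist ω_k ∈ [0, 2π] and A_k ∈ ℝ for 0 ≤ k ≤ N such that p(x) = Σ_{k=0}^{N} A_k · T_N(ω_k, α_k, x) for all x ∈ [0, 1], where T_N(ω,α,x) = Σ_{l=0}^{N} ω^l sin(α + lπ/2) x^l / l!. -/

import Mathlib

open Real Finset

/-!
The `l`-th Taylor coefficient of `sin (ω x + α)` is `ω ^ l * c l` with
`c l = sin (α + l π / 2) / l!`, and `c l ≠ 0` for `0 < α < π / 2`. For fixed `α` the vectors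
`(ω ^ l * c l)_l`, `ω ∈ [0, 2π]`, span `ℝ^(N+1)`: at `N + 1` distinct frequencies they are the rows
of a Vandermonde matrix times an invertible diagonal one. Hence the frequencies can be chosen one
at a time, each coefficient vector escaping the span of the previous ones. The `N + 1` vectors
obtained form a basis, and the amplitudes are the coordinates of `(b l)_l` in it.
-/

theorem Real.sin_add_nat_mul_pi_div_two_ne_zero {a : ℝ} (ha : a ∈ Set.Ioo 0 (π / 2)) (l : ℕ) :
    sin (a + l * π / 2) ≠ 0 := by
  rw [Real.sin_ne_zero_iff]
  intro n hn
  obtain ⟨j, hj⟩ : ∃ j : ℤ, (j : ℝ) * (π / 2) = a := ⟨2 * n - l, by push_cast; linarith⟩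
  have hj0 : (0 : ℤ) < j := by exact_mod_cast (by nlinarith [ha.1, pi_pos] : (0 : ℝ) < j)
  have hj1 : j < 1 := by exact_mod_cast (by nlinarith [ha.2, pi_pos] : (j : ℝ) < 1)
  omega

section LinearAlgebra

variable {K V T : Type*} [Field K] [AddCommGroup V] [Module K V]

theorem span_image_monomial_mul_eq_top {n : ℕ} (c : Fin n → K) (hc : ∀ l, c l ≠ 0)
    {S : Set K} (hS : S.Infinite) :
    Submodule.span K ((fun (t : K) (l : Fin n) => t ^ (l : ℕ) * c l) '' S) = ⊤ := by
  set x : Fin n → K := fun j => hS.natEmbedding _ j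
  have hx : Function.Injective x :=
    Subtype.val_injective.comp ((hS.natEmbedding _).injective.comp Fin.val_injective)
  set M := Matrix.vandermonde x * Matrix.diagonal c
  have hdet : M.det ≠ 0 := by
    rw [Matrix.det_mul, Matrix.det_diagonal]
    exact mul_ne_zero (Matrix.det_vandermonde_ne_zero_iff.mpr hx)
      (prod_ne_zero_iff.mpr fun l _ => hc l)
  have hrows : Submodule.span K (Set.range M.row) = ⊤ :=
    (Matrix.linearIndependent_rows_of_det_ne_zero hdet).span_eq_top_of_card_eq_finrank'
      (by simp)
  refine eq_top_iff.mpr (hrows ▸ Submodule.span_mono ?_)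
  rintro - ⟨j, rfl⟩
  exact ⟨x j, (hS.natEmbedding _ j).2, by ext l; simp [M, Matrix.vandermonde]⟩

variable [Nonempty T]

theorem exists_linearIndepOn_of_span_image_eq_top (g : ℕ → T → V) (S : Set T) {m : ℕ}
    (hm : m ≤ Module.finrank K V) (hg : ∀ k < m, Submodule.span K (g k '' S) = ⊤) :
    ∃ t : ℕ → T, (∀ k < m, t k ∈ S) ∧ LinearIndepOn K (fun k => g k (t k)) (range m) := by
  induction m with
  | zero => exact ⟨fun _ => Classical.arbitrary T, by simp, by simp⟩
  | succ m ih =>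
    obtain ⟨t, htS, hli⟩ := ih (by omega) fun k hk => hg k (by omega)
    have hW : Submodule.span K ((fun k => g k (t k)) '' (range m : Set ℕ)) ≠ ⊤ := by
      classical
      rw [← coe_image]
      exact (Submodule.lt_top_of_finrank_lt_finrank ((finrank_span_finset_le_card _).trans_lt
        (card_image_le.trans_lt (by simpa using hm)))).ne
    obtain ⟨τ, hτS, hτW⟩ :
        ∃ τ ∈ S, g m τ ∉ Submodule.span K ((fun k => g k (t k)) '' (range m : Set ℕ)) := by
      by_contra! h
      exact hW (eq_top_iff.mpr
        (hg m (by omega) ▸ Submodule.span_le.mpr (Set.image_subset_iff.mpr h)))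
    have heq : Set.EqOn (fun k => g k (Function.update t m τ k)) (fun k => g k (t k)) (range m) :=
      fun k hk => by simp [Function.update_of_ne (mem_range.mp hk).ne]
    refine ⟨Function.update t m τ, fun k hk => ?_, ?_⟩
    · rcases eq_or_ne k m with rfl | hkm
      · simpa using hτS
      · simpa [hkm] using htS k (by omega)
    · rw [range_add_one, coe_insert, linearIndepOn_insert (by simp), heq.image_eq]
      exact ⟨hli.congr heq.symm, by simpa only [Function.update_self] using hτW⟩

theorem exists_span_image_range_eq_top [FiniteDimensional K V] (g : ℕ → T → V) (S : Set T)
    {n : ℕ} (hn : Module.finrank K V = n) (hg : ∀ k < n, Submodule.span K (g k '' S) = ⊤) :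
    ∃ t : ℕ → T, (∀ k < n, t k ∈ S) ∧
      Submodule.span K ((fun k => g k (t k)) '' (range n : Set ℕ)) = ⊤ := by
  obtain ⟨t, htS, hli⟩ := exists_linearIndepOn_of_span_image_eq_top g S hn.ge hg
  refine ⟨t, htS, ?_⟩
  rw [Set.image_eq_range]
  exact hli.linearIndependent.span_eq_top_of_card_eq_finrank' (by simp [hn])

end LinearAlgebra

/-- Any polynomial of degree at most `N` is an exact combination of the Taylor
polynomials `T_N(ω_k, α_k, ·)` of sinusoids with suitable frequencies and amplitudes. -/
theorem poly_eq_sum_taylor_sin (N : ℕ) (b α : ℕ → ℝ)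
    (hα : ∀ k ≤ N, α k ∈ Set.Ioo (0:ℝ) (π / 2)) :
    ∃ ω A : ℕ → ℝ, (∀ k ≤ N, ω k ∈ Set.Icc (0:ℝ) (2 * π)) ∧
      ∀ x ∈ Set.Icc (0:ℝ) 1,
        (∑ l ∈ Finset.range (N + 1), b l * x ^ l) =
          ∑ k ∈ Finset.range (N + 1), A k *
            ∑ l ∈ Finset.range (N + 1),
              (ω k) ^ l * Real.sin (α k + l * π / 2) * x ^ l / l.factorial := by
  set c : ℕ → ℕ → ℝ := fun k l => sin (α k + l * π / 2) / l.factorial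
  have hc : ∀ k ≤ N, ∀ l, c k l ≠ 0 := fun k hk l =>
    div_ne_zero (sin_add_nat_mul_pi_div_two_ne_zero (hα k hk) l) (by positivity)
  obtain ⟨ω, hω, hspan⟩ := exists_span_image_range_eq_top
    (fun k (t : ℝ) (l : Fin (N + 1)) => t ^ (l : ℕ) * c k l) (Set.Icc 0 (2 * π))
    (Module.finrank_fin_fun ℝ) fun k hk =>
      span_image_monomial_mul_eq_top _ (fun l => hc k (by omega) l)
        (Set.Icc_infinite (by positivity))
  obtain ⟨A, hA⟩ := (Submodule.mem_span_image_finset_iff_exists_fun' ℝ).mp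
    (hspan ▸ Submodule.mem_top (x := fun l : Fin (N + 1) => b l))
  have hb : ∀ l ∈ range (N + 1), b l = ∑ k ∈ range (N + 1), A k * (ω k ^ l * c k l) :=
    fun l hl => by simpa [Finset.sum_apply] using (congrFun hA ⟨l, mem_range.mp hl⟩).symm
  refine ⟨ω, A, fun k hk => hω k (by omega), fun x _ => ?_⟩
  rw [sum_congr rfl fun l hl => by rw [hb l hl, sum_mul], sum_comm]
  refine sum_congr rfl fun k _ => ?_
  rw [mul_sum]
  refine sum_congr rfl fun l _ => ?_
  simp only [c]
  ring
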